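/- arXiv:1810.00552 — 4 statements merged into one kernel-verified Lean document; each statement's English description precedes it below -/
import Mathlib

section
/- For μ₁, μ₂ ∈ ℝ, σ₁, σ₂ > 0 and γ > 0, the density power divergence between the normal densities φ(·; μ₁, σ₁) and φ(·; μ₂, σ₂) admits the closed form d_γ( φ(·;μ₁,σ₁), φ(·;μ₂,σ₂) ) = (2π)^{-γ/2} [ (1+γ)^{-1/2} σ₂^{-γ} − (1 + 1/γ) σ₂^{1−γ} (σ₂² + γσ₁²)^{-1/2} exp( −γ(μ₁−μ₂)²/(2(σ₂² + γσ₁²)) ) + γ^{-1} (1+γ)^{-1/2} σ₁^{-γ} ]. -/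
open MeasureTheory Real

/-- The `N(μ, σ²)` probability density function. -/
noncomputable def normalPDF (μ σ y : ℝ) : ℝ :=
  (Real.sqrt (2 * Real.pi * σ ^ 2))⁻¹ * Real.exp (-(y - μ) ^ 2 / (2 * σ ^ 2))

/-- The density power divergence with tuning parameter `γ > 0` between densities `f₁, f₂`. -/
noncomputable def dpd (γ : ℝ) (f₁ f₂ : ℝ → ℝ) : ℝ :=
  ∫ y, ((f₂ y) ^ (1 + γ) - (1 + 1 / γ) * (f₂ y) ^ γ * f₁ y + (1 / γ) * (f₁ y) ^ (1 + γ))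

lemma gauss_integrable (A B K : ℝ) (hA : 0 < A) :
    Integrable (fun y : ℝ => K * Real.exp (-(A * (y - B) ^ 2))) := by
  have h : Integrable (fun y : ℝ => Real.exp (-A * y ^ 2)) := integrable_exp_neg_mul_sq hA
  have h2 := (h.comp_sub_right B).const_mul K
  simpa [neg_mul] using h2

lemma gauss_integral (A B K : ℝ) (hA : 0 < A) :
    ∫ y : ℝ, K * Real.exp (-(A * (y - B) ^ 2)) = K * Real.sqrt (π / A) := by
  rw [MeasureTheory.integral_const_mul]
  have h := integral_sub_right_eq_self (μ := volume) (fun y : ℝ => Real.exp (-(A * y ^ 2))) B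
  rw [h]
  simp_rw [← neg_mul A]
  rw [integral_gaussian A]

lemma normalPDF_rpow (μ σ y p : ℝ) (hσ : 0 < σ) :
    normalPDF μ σ y ^ p
      = (2 * π * σ ^ 2) ^ (-(p / 2)) * Real.exp (-(p / (2 * σ ^ 2) * (y - μ) ^ 2)) := by
  have h1 : (0:ℝ) < 2 * π * σ ^ 2 := by positivity
  unfold normalPDF
  rw [Real.mul_rpow (by positivity) (Real.exp_pos _).le]
  congr 1
  · rw [Real.sqrt_eq_rpow, ← Real.rpow_neg h1.le, ← Real.rpow_mul h1.le]
    congr 1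
    ring
  · rw [Real.rpow_def_of_pos (Real.exp_pos _), Real.log_exp]
    congr 1
    field_simp

lemma piece1 (σ γ : ℝ) (hσ : 0 < σ) (hγ : 0 < γ) :
    (2 * π * σ ^ 2) ^ (-((1 + γ) / 2)) * Real.sqrt (π / ((1 + γ) / (2 * σ ^ 2)))
      = (2 * π) ^ (-γ / 2) * ((1 + γ) ^ (-(1 : ℝ) / 2) * σ ^ (-γ)) := by
  have hπ : (0:ℝ) < π := pi_pos
  have h2π : (0:ℝ) < 2 * π := by positivity
  have h2πσ : (0:ℝ) < 2 * π * σ ^ 2 := by positivity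
  have h1γ : (0:ℝ) < 1 + γ := by linarith
  have harg : π / ((1 + γ) / (2 * σ ^ 2)) = (2 * π * σ ^ 2) / (1 + γ) := by
    field_simp
  rw [harg, Real.sqrt_eq_rpow,
    Real.rpow_def_of_pos h2πσ, Real.rpow_def_of_pos (div_pos h2πσ h1γ),
    Real.rpow_def_of_pos h2π, Real.rpow_def_of_pos h1γ, Real.rpow_def_of_pos hσ,
    ← Real.exp_add, ← Real.exp_add, ← Real.exp_add]
  congr 1
  rw [Real.log_div h2πσ.ne' h1γ.ne', Real.log_mul h2π.ne' (by positivity), Real.log_pow]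
  push_cast
  ring

lemma piece2 (σ₁ σ₂ γ : ℝ) (hσ₁ : 0 < σ₁) (hσ₂ : 0 < σ₂) (hγ : 0 < γ) :
    (2 * π * σ₂ ^ 2) ^ (-(γ / 2)) * (2 * π * σ₁ ^ 2) ^ (-((1:ℝ) / 2)) *
      Real.sqrt (π / ((σ₂ ^ 2 + γ * σ₁ ^ 2) / (2 * σ₁ ^ 2 * σ₂ ^ 2)))
    = (2 * π) ^ (-γ / 2) * (σ₂ ^ (1 - γ) * (σ₂ ^ 2 + γ * σ₁ ^ 2) ^ (-(1:ℝ) / 2)) := by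
  have hπ : (0:ℝ) < π := pi_pos
  have h2π : (0:ℝ) < 2 * π := by positivity
  have h2πσ₁ : (0:ℝ) < 2 * π * σ₁ ^ 2 := by positivity
  have h2πσ₂ : (0:ℝ) < 2 * π * σ₂ ^ 2 := by positivity
  have hs : (0:ℝ) < σ₂ ^ 2 + γ * σ₁ ^ 2 := by positivity
  have harg : π / ((σ₂ ^ 2 + γ * σ₁ ^ 2) / (2 * σ₁ ^ 2 * σ₂ ^ 2))
      = (2 * π * σ₁ ^ 2 * σ₂ ^ 2) / (σ₂ ^ 2 + γ * σ₁ ^ 2) := by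
    field_simp
  have hnum : (0:ℝ) < 2 * π * σ₁ ^ 2 * σ₂ ^ 2 := by positivity
  rw [harg, Real.sqrt_eq_rpow,
    Real.rpow_def_of_pos h2πσ₂, Real.rpow_def_of_pos h2πσ₁,
    Real.rpow_def_of_pos (div_pos hnum hs),
    Real.rpow_def_of_pos h2π, Real.rpow_def_of_pos hσ₂, Real.rpow_def_of_pos hs,
    ← Real.exp_add, ← Real.exp_add, ← Real.exp_add, ← Real.exp_add]
  congr 1
  rw [Real.log_div hnum.ne' hs.ne', Real.log_mul (by positivity : (0:ℝ) < 2 * π * σ₁ ^ 2).ne' (by positivity),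
    Real.log_mul h2π.ne' (by positivity), Real.log_mul h2π.ne' (by positivity), Real.log_pow, Real.log_pow]
  push_cast
  ring

/-- closed form of the density power divergence between two normal densities. -/
theorem dpd_normal_closed_form
    (μ₁ μ₂ σ₁ σ₂ γ : ℝ) (hσ₁ : 0 < σ₁) (hσ₂ : 0 < σ₂) (hγ : 0 < γ) :
    dpd γ (normalPDF μ₁ σ₁) (normalPDF μ₂ σ₂)
      = (2 * Real.pi) ^ (-γ / 2) *
          ((1 + γ) ^ (-(1 : ℝ) / 2) * σ₂ ^ (-γ)
            - (1 + 1 / γ) * σ₂ ^ (1 - γ) * (σ₂ ^ 2 + γ * σ₁ ^ 2) ^ (-(1 : ℝ) / 2)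
              * Real.exp (-(γ * (μ₁ - μ₂) ^ 2) / (2 * (σ₂ ^ 2 + γ * σ₁ ^ 2)))
            + γ⁻¹ * (1 + γ) ^ (-(1 : ℝ) / 2) * σ₁ ^ (-γ)) := by
  have hπ : (0:ℝ) < π := pi_pos
  have h1γ : (0:ℝ) < 1 + γ := by linarith
  have hs : (0:ℝ) < σ₂ ^ 2 + γ * σ₁ ^ 2 := by positivity
  have hA₁ : (0:ℝ) < (1 + γ) / (2 * σ₂ ^ 2) := by positivity
  have hA₂ : (0:ℝ) < (σ₂ ^ 2 + γ * σ₁ ^ 2) / (2 * σ₁ ^ 2 * σ₂ ^ 2) := by positivity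
  have hA₃ : (0:ℝ) < (1 + γ) / (2 * σ₁ ^ 2) := by positivity
  have key : ∀ y : ℝ,
      (normalPDF μ₂ σ₂ y) ^ (1 + γ) - (1 + 1 / γ) * (normalPDF μ₂ σ₂ y) ^ γ * normalPDF μ₁ σ₁ y
        + (1 / γ) * (normalPDF μ₁ σ₁ y) ^ (1 + γ)
      = (2 * π * σ₂ ^ 2) ^ (-((1 + γ) / 2)) *
          Real.exp (-((1 + γ) / (2 * σ₂ ^ 2) * (y - μ₂) ^ 2))
        - ((1 + 1 / γ) * ((2 * π * σ₂ ^ 2) ^ (-(γ / 2)) * (2 * π * σ₁ ^ 2) ^ (-((1:ℝ) / 2))) *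
            Real.exp (-(γ * (μ₁ - μ₂) ^ 2) / (2 * (σ₂ ^ 2 + γ * σ₁ ^ 2)))) *
            Real.exp (-((σ₂ ^ 2 + γ * σ₁ ^ 2) / (2 * σ₁ ^ 2 * σ₂ ^ 2) *
              (y - (γ * σ₁ ^ 2 * μ₂ + σ₂ ^ 2 * μ₁) / (σ₂ ^ 2 + γ * σ₁ ^ 2)) ^ 2))
        + (1 / γ) * (2 * π * σ₁ ^ 2) ^ (-((1 + γ) / 2)) *
            Real.exp (-((1 + γ) / (2 * σ₁ ^ 2) * (y - μ₁) ^ 2)) := by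
    intro y
    have hφ₁ : normalPDF μ₁ σ₁ y
        = (2 * π * σ₁ ^ 2) ^ (-((1:ℝ) / 2)) * Real.exp (-(1 / (2 * σ₁ ^ 2) * (y - μ₁) ^ 2)) := by
      have h := normalPDF_rpow μ₁ σ₁ y 1 hσ₁
      rw [Real.rpow_one] at h
      rw [h]
    rw [normalPDF_rpow μ₂ σ₂ y (1 + γ) hσ₂, normalPDF_rpow μ₂ σ₂ y γ hσ₂,
        normalPDF_rpow μ₁ σ₁ y (1 + γ) hσ₁, hφ₁]
    have hexp : Real.exp (-(γ / (2 * σ₂ ^ 2) * (y - μ₂) ^ 2)) *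
          Real.exp (-(1 / (2 * σ₁ ^ 2) * (y - μ₁) ^ 2))
        = Real.exp (-(γ * (μ₁ - μ₂) ^ 2) / (2 * (σ₂ ^ 2 + γ * σ₁ ^ 2))) *
          Real.exp (-((σ₂ ^ 2 + γ * σ₁ ^ 2) / (2 * σ₁ ^ 2 * σ₂ ^ 2) *
            (y - (γ * σ₁ ^ 2 * μ₂ + σ₂ ^ 2 * μ₁) / (σ₂ ^ 2 + γ * σ₁ ^ 2)) ^ 2)) := by
      rw [← Real.exp_add, ← Real.exp_add]
      congr 1
      field_simp
      ring
    linear_combination (-(1 + 1 / γ)) * (2 * π * σ₂ ^ 2) ^ (-(γ / 2)) *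
      (2 * π * σ₁ ^ 2) ^ (-((1:ℝ) / 2)) * hexp
  have hI₁ := gauss_integrable ((1 + γ) / (2 * σ₂ ^ 2)) μ₂
    ((2 * π * σ₂ ^ 2) ^ (-((1 + γ) / 2))) hA₁
  have hI₂ := gauss_integrable ((σ₂ ^ 2 + γ * σ₁ ^ 2) / (2 * σ₁ ^ 2 * σ₂ ^ 2))
    ((γ * σ₁ ^ 2 * μ₂ + σ₂ ^ 2 * μ₁) / (σ₂ ^ 2 + γ * σ₁ ^ 2))
    ((1 + 1 / γ) * ((2 * π * σ₂ ^ 2) ^ (-(γ / 2)) * (2 * π * σ₁ ^ 2) ^ (-((1:ℝ) / 2))) *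
      Real.exp (-(γ * (μ₁ - μ₂) ^ 2) / (2 * (σ₂ ^ 2 + γ * σ₁ ^ 2)))) hA₂
  have hI₃ := gauss_integrable ((1 + γ) / (2 * σ₁ ^ 2)) μ₁
    ((1 / γ) * (2 * π * σ₁ ^ 2) ^ (-((1 + γ) / 2))) hA₃
  unfold dpd
  rw [funext key]
  have hI₁₂ : Integrable (fun y : ℝ =>
      (2 * π * σ₂ ^ 2) ^ (-((1 + γ) / 2)) * Real.exp (-((1 + γ) / (2 * σ₂ ^ 2) * (y - μ₂) ^ 2))
      - (1 + 1 / γ) * ((2 * π * σ₂ ^ 2) ^ (-(γ / 2)) * (2 * π * σ₁ ^ 2) ^ (-((1:ℝ) / 2))) *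
          Real.exp (-(γ * (μ₁ - μ₂) ^ 2) / (2 * (σ₂ ^ 2 + γ * σ₁ ^ 2))) *
          Real.exp (-((σ₂ ^ 2 + γ * σ₁ ^ 2) / (2 * σ₁ ^ 2 * σ₂ ^ 2) *
            (y - (γ * σ₁ ^ 2 * μ₂ + σ₂ ^ 2 * μ₁) / (σ₂ ^ 2 + γ * σ₁ ^ 2)) ^ 2))) volume :=
    hI₁.sub hI₂
  rw [integral_add hI₁₂ hI₃, integral_sub hI₁ hI₂,
    gauss_integral _ _ _ hA₁, gauss_integral _ _ _ hA₂, gauss_integral _ _ _ hA₃]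
  have p1 := piece1 σ₂ γ hσ₂ hγ
  have p2 := piece2 σ₁ σ₂ γ hσ₁ hσ₂ hγ
  have p3 := piece1 σ₁ γ hσ₁ hγ
  linear_combination p1 + (1 / γ) * p3 -
    (1 + 1 / γ) * Real.exp (-(γ * (μ₁ - μ₂) ^ 2) / (2 * (σ₂ ^ 2 + γ * σ₁ ^ 2))) * p2
end

section
/- Let x₁, …, x_n ∈ ℝ^p be such that XᵀX = Σ_{i=1}^n x_i x_iᵀ is invertible, let β ∈ ℝ^p and σ > 0, and define for t = (t₁, …, t_n) ∈ ℝⁿ the map IF(t) = (1+τ)^{3/2} (XᵀX)^{-1} Σ_{i=1}^n x_i (t_i − x_iᵀβ) exp( −τ (t_i − x_iᵀβ)² / (2σ²) ). If τ > 0 then IF is a bounded function of t on ℝⁿ; if τ = 0 and x_i ≠ 0 for at least one i, then IF is unbounded on ℝⁿ. -/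
open Matrix Real

lemma key_bound {σ τ : ℝ} (hσ : 0 < σ) (hτ : 0 < τ) (u : ℝ) :
    |u * Real.exp (-(τ * u ^ 2) / (2 * σ ^ 2))| ≤ max 1 (2 * σ ^ 2 / τ) := by
  rw [abs_mul, Real.abs_exp]
  rcases le_or_gt |u| 1 with hu | hu
  · have h1 : Real.exp (-(τ * u ^ 2) / (2 * σ ^ 2)) ≤ 1 := by
      rw [Real.exp_le_one_iff]
      have : 0 ≤ τ * u ^ 2 := by positivity
      have : 0 < 2 * σ ^ 2 := by positivity
      apply div_nonpos_of_nonpos_of_nonneg <;> linarith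
    calc |u| * Real.exp (-(τ * u ^ 2) / (2 * σ ^ 2)) ≤ 1 * 1 := by
          apply mul_le_mul hu h1 (Real.exp_nonneg _) zero_le_one
      _ ≤ max 1 (2 * σ ^ 2 / τ) := by simp
  · have hu0 : u ≠ 0 := by
      intro h; rw [h] at hu; simp at hu; linarith
    have hz : 0 < τ * u ^ 2 / (2 * σ ^ 2) := by positivity
    have hez : Real.exp (-(τ * u ^ 2) / (2 * σ ^ 2)) ≤ (τ * u ^ 2 / (2 * σ ^ 2))⁻¹ := by
      rw [show -(τ * u ^ 2) / (2 * σ ^ 2) = -(τ * u ^ 2 / (2 * σ ^ 2)) by ring,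
        Real.exp_neg]
      exact inv_anti₀ hz ((by linarith [Real.add_one_le_exp (τ * u ^ 2 / (2 * σ ^ 2))]))
    have h3 : |u| * (τ * u ^ 2 / (2 * σ ^ 2))⁻¹ = 2 * σ ^ 2 / (τ * |u|) := by
      have h4 : u ^ 2 = |u| * |u| := by rw [← sq_abs]; ring
      rw [h4]
      have : |u| ≠ 0 := by positivity
      field_simp
    calc |u| * Real.exp (-(τ * u ^ 2) / (2 * σ ^ 2))
        ≤ |u| * (τ * u ^ 2 / (2 * σ ^ 2))⁻¹ := by
          apply mul_le_mul_of_nonneg_left hez (abs_nonneg u)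
      _ = 2 * σ ^ 2 / (τ * |u|) := h3
      _ ≤ 2 * σ ^ 2 / τ := by
          apply div_le_div_of_nonneg_left (by positivity) hτ
          nlinarith
      _ ≤ max 1 (2 * σ ^ 2 / τ) := le_max_right _ _

/-- the influence function of the MDPDE of the regression coefficient,
`IF(t) = (1+τ)^{3/2} (XᵀX)⁻¹ Σᵢ xᵢ (tᵢ − xᵢᵀβ) exp(−τ(tᵢ − xᵢᵀβ)²/(2σ²))`,
is bounded in `t` when `τ > 0`, and unbounded when `τ = 0` and some `xᵢ ≠ 0`. -/
theorem mdpde_regression_IF_boundedness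
    {n p : ℕ} (x : Fin n → Fin p → ℝ) (β : Fin p → ℝ) (σ τ : ℝ)
    (hσ : 0 < σ) (hτ : 0 ≤ τ)
    (A : Matrix (Fin p) (Fin p) ℝ)
    (hA : A = ∑ i, Matrix.vecMulVec (x i) (x i))  -- A = XᵀX
    (hAinv : IsUnit A) :
    let IF : (Fin n → ℝ) → (Fin p → ℝ) := fun t =>
      ((1 + τ) ^ ((3 : ℝ) / 2)) •
        A⁻¹.mulVec (∑ i, ((t i - x i ⬝ᵥ β) *
          Real.exp (-(τ * (t i - x i ⬝ᵥ β) ^ 2) / (2 * σ ^ 2))) • x i)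
    ((0 < τ → ∃ C : ℝ, ∀ t : Fin n → ℝ, ‖IF t‖ ≤ C) ∧
      (τ = 0 → (∃ i, x i ≠ 0) → ∀ C : ℝ, ∃ t : Fin n → ℝ, C < ‖IF t‖)) := by
  intro IF
  have hAA : A * A⁻¹ = 1 := Matrix.mul_nonsing_inv A (A.isUnit_iff_isUnit_det.mp hAinv)
  constructor
  · intro hτ0
    set M := max 1 (2 * σ ^ 2 / τ) with hM
    have hM0 : 0 ≤ M := le_trans zero_le_one (le_max_left _ _)
    let L := LinearMap.toContinuousLinearMap (Matrix.mulVecLin A⁻¹)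
    refine ⟨(1 + τ) ^ ((3 : ℝ) / 2) * (‖L‖ * ∑ i, M * ‖x i‖), fun t => ?_⟩
    have hpos : 0 ≤ (1 + τ) ^ ((3 : ℝ) / 2) := Real.rpow_nonneg (by linarith) _
    have hv : ‖∑ i, ((t i - x i ⬝ᵥ β) *
        Real.exp (-(τ * (t i - x i ⬝ᵥ β) ^ 2) / (2 * σ ^ 2))) • x i‖ ≤ ∑ i, M * ‖x i‖ := by
      refine (norm_sum_le _ _).trans (Finset.sum_le_sum fun i _ => ?_)
      rw [norm_smul, Real.norm_eq_abs]
      exact mul_le_mul_of_nonneg_right (key_bound hσ hτ0 _) (norm_nonneg _)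
    have hLv : ∀ v : Fin p → ℝ, ‖A⁻¹.mulVec v‖ ≤ ‖L‖ * ‖v‖ := fun v => L.le_opNorm v
    simp only [IF]
    rw [norm_smul, Real.norm_eq_abs, abs_of_nonneg hpos]
    apply mul_le_mul_of_nonneg_left _ hpos
    calc ‖A⁻¹.mulVec _‖ ≤ ‖L‖ * ‖_‖ := hLv _
      _ ≤ ‖L‖ * ∑ i, M * ‖x i‖ := mul_le_mul_of_nonneg_left hv (norm_nonneg _)
  · rintro rfl ⟨i₀, hx⟩ C
    set w := A⁻¹.mulVec (x i₀) with hw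
    have hw0 : w ≠ 0 := by
      intro h
      apply hx
      have : A.mulVec w = x i₀ := by
        rw [hw, Matrix.mulVec_mulVec, hAA, Matrix.one_mulVec]
      rw [h, Matrix.mulVec_zero] at this
      exact this.symm
    have hwn : 0 < ‖w‖ := norm_pos_iff.mpr hw0
    set s := (|C| + 1) / ‖w‖ with hs
    refine ⟨fun i => x i ⬝ᵥ β + if i = i₀ then s else 0, ?_⟩
    have ht : ∀ i : Fin n, (x i ⬝ᵥ β + (if i = i₀ then s else 0)) - x i ⬝ᵥ β
        = if i = i₀ then s else 0 := fun i => by ring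
    simp only [IF, ht]
    have hsum : (∑ i, ((if i = i₀ then s else 0) *
        Real.exp (-(0 * (if i = i₀ then s else 0) ^ 2) / (2 * σ ^ 2))) • x i) = s • x i₀ := by
      have : ∀ i : Fin n, ((if i = i₀ then s else 0) *
          Real.exp (-(0 * (if i = i₀ then s else 0) ^ 2) / (2 * σ ^ 2))) • x i
          = if i = i₀ then s • x i else 0 := by
        intro i
        split <;> simp
      rw [Finset.sum_congr rfl (fun i _ => this i), Finset.sum_ite_eq' Finset.univ i₀]
      simp
    rw [hsum, Matrix.mulVec_smul]
    rw [norm_smul, norm_smul, Real.norm_eq_abs, Real.norm_eq_abs]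
    have h1 : ((1 : ℝ) + 0) ^ ((3 : ℝ) / 2) = 1 := by norm_num
    rw [h1]
    have hsabs : |s| = (|C| + 1) / ‖w‖ := by
      rw [hs, abs_of_pos (by positivity)]
    rw [hsabs]
    have : (|C| + 1) / ‖w‖ * ‖w‖ = |C| + 1 := div_mul_cancel₀ _ (ne_of_gt hwn)
    rw [abs_one, one_mul, this]
    calc C ≤ |C| := le_abs_self C
      _ < |C| + 1 := by linarith
end

section
/- Let x₁, …, x_n ∈ ℝ^p with partition x_i = (x_i^{(1)}, x_i^{(2)}), x_i^{(1)} ∈ ℝ^r, let M be an r×r real symmetric positive semidefinite matrix, β ∈ ℝ^p, σ > 0, c > 0, and define for t ∈ ℝⁿ the map IF₂(t) = c · Σ_{i=1}^n ( x_i^{(1)ᵀ} M x_i^{(1)} ) (t_i − x_iᵀβ)² exp( −τ (t_i − x_iᵀβ)² / σ² ). Then IF₂(t) ≥ 0 for all t; if τ > 0 then IF₂ is bounded on ℝⁿ, with sup_t IF₂(t) ≤ c (σ²/(τe)) Σ_{i=1}^n x_i^{(1)ᵀ} M x_i^{(1)}; and if τ = 0 and x_i^{(1)ᵀ} M x_i^{(1)}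 > 0 for at least one i, then IF₂ is unbounded on ℝⁿ. -/
open Matrix Real Finset Filter

/-! The summands are `qᵢ · φ(tᵢ - xᵢᵀβ)` with `qᵢ ≥ 0` (as `M` is positive semidefinite) and
`φ(y) = y² exp(-τ y²/σ²)`. For `τ > 0`, writing `u = τ y²/σ²` gives `φ(y) = (σ²/τ) · u e⁻ᵘ`,
and `u e⁻ᵘ ≤ e⁻¹`. For `τ = 0`, `φ(y) = y²`, so shifting every `tᵢ` by `R` gives
`IF₂ = c (Σᵢ qᵢ) R²`, which is unbounded in `R` as soon as some `qᵢ > 0`. -/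

lemma sq_mul_exp_neg_mul_sq_div_le {σ τ : ℝ} (hσ : σ ≠ 0) (hτ : 0 < τ) (y : ℝ) :
    y ^ 2 * exp (-(τ * y ^ 2) / σ ^ 2) ≤ σ ^ 2 / (τ * exp 1) := by
  set u := τ * y ^ 2 / σ ^ 2
  have hφ : y ^ 2 * exp (-(τ * y ^ 2) / σ ^ 2) = σ ^ 2 / τ * (u * exp (-u)) := by
    simp only [u, neg_div]
    field_simp
  calc y ^ 2 * exp (-(τ * y ^ 2) / σ ^ 2) = σ ^ 2 / τ * (u * exp (-u)) := hφ
    _ ≤ σ ^ 2 / τ * exp (-1) := by gcongr; exact mul_exp_neg_le_exp_neg_one u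
    _ = σ ^ 2 / (τ * exp 1) := by rw [Real.exp_neg]; field_simp

lemma exists_lt_mul_sq {a : ℝ} (ha : 0 < a) (C : ℝ) : ∃ y : ℝ, C < a * y ^ 2 :=
  (((tendsto_pow_atTop two_ne_zero).const_mul_atTop ha).eventually_gt_atTop C).exists

theorem dpd_test_second_order_IF_boundedness_general
    {n r s : ℕ}
    (x1 : Fin n → Fin r → ℝ) (x2 : Fin n → Fin s → ℝ)            -- xᵢ = (xᵢ⁽¹⁾, xᵢ⁽²⁾)
    (M : Matrix (Fin r) (Fin r) ℝ) (hM : M.PosSemidef)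
    (β1 : Fin r → ℝ) (β2 : Fin s → ℝ)                            -- β = (β⁽¹⁾, β⁽²⁾)
    (σ τ c : ℝ) (hσ : 0 < σ) (hc : 0 < c) :
    let xb : Fin n → ℝ := fun i => x1 i ⬝ᵥ β1 + x2 i ⬝ᵥ β2       -- xᵢᵀβ
    let q : Fin n → ℝ := fun i => x1 i ⬝ᵥ M.mulVec (x1 i)        -- xᵢ⁽¹⁾ᵀ M xᵢ⁽¹⁾
    let IF₂ : (Fin n → ℝ) → ℝ := fun t =>
      c * ∑ i, q i * (t i - xb i) ^ 2 *
        Real.exp (-(τ * (t i - xb i) ^ 2) / σ ^ 2)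
    ((∀ t : Fin n → ℝ, 0 ≤ IF₂ t) ∧
      (0 < τ → ∀ t : Fin n → ℝ, IF₂ t ≤ c * (σ ^ 2 / (τ * Real.exp 1)) * ∑ i, q i) ∧
      (τ = 0 → (∃ i, 0 < q i) → ∀ C : ℝ, ∃ t : Fin n → ℝ, C < IF₂ t)) := by
  intro xb q IF₂
  have hq : ∀ i, 0 ≤ q i := fun i => hM.dotProduct_mulVec_nonneg (x1 i)
  refine ⟨fun t => ?_, fun hτ t => ?_, fun hτ ⟨i₀, hi₀⟩ C => ?_⟩
  · exact mul_nonneg hc.le (sum_nonneg fun i _ => by have := hq i; positivity)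
  · rw [mul_assoc c, mul_sum]
    refine mul_le_mul_of_nonneg_left (sum_le_sum fun i _ => ?_) hc.le
    rw [mul_assoc, mul_comm _ (q i)]
    exact mul_le_mul_of_nonneg_left (sq_mul_exp_neg_mul_sq_div_le hσ.ne' hτ _) (hq i)
  · have hsum : 0 < ∑ i, q i := sum_pos' (fun i _ => hq i) ⟨i₀, mem_univ i₀, hi₀⟩
    obtain ⟨R, hR⟩ := exists_lt_mul_sq (mul_pos hc hsum) C
    refine ⟨fun i => xb i + R, hR.trans_eq ?_⟩
    simp [IF₂, hτ, sum_mul, mul_assoc]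

/-- the second-order influence function
`IF₂(t) = c Σᵢ (xᵢ⁽¹⁾ᵀ M xᵢ⁽¹⁾)(tᵢ − xᵢᵀβ)² exp(−τ(tᵢ − xᵢᵀβ)²/σ²)` is nonnegative; for
`τ > 0` it is bounded with `sup_t IF₂(t) ≤ c (σ²/(τ e)) Σᵢ xᵢ⁽¹⁾ᵀ M xᵢ⁽¹⁾`; for `τ = 0` with
some `xᵢ⁽¹⁾ᵀ M xᵢ⁽¹⁾ > 0` it is unbounded. -/
theorem dpd_test_second_order_IF_boundedness
    {n r s : ℕ}
    (x1 : Fin n → Fin r → ℝ) (x2 : Fin n → Fin s → ℝ)            -- xᵢ = (xᵢ⁽¹⁾, xᵢ⁽²⁾)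
    (M : Matrix (Fin r) (Fin r) ℝ) (hM : M.PosSemidef)
    (β1 : Fin r → ℝ) (β2 : Fin s → ℝ)                            -- β = (β⁽¹⁾, β⁽²⁾)
    (σ τ c : ℝ) (hσ : 0 < σ) (hc : 0 < c) (hτ : 0 ≤ τ) :
    let xb : Fin n → ℝ := fun i => x1 i ⬝ᵥ β1 + x2 i ⬝ᵥ β2       -- xᵢᵀβ
    let q : Fin n → ℝ := fun i => x1 i ⬝ᵥ M.mulVec (x1 i)        -- xᵢ⁽¹⁾ᵀ M xᵢ⁽¹⁾
    let IF₂ : (Fin n → ℝ) → ℝ := fun t =>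
      c * ∑ i, q i * (t i - xb i) ^ 2 *
        Real.exp (-(τ * (t i - xb i) ^ 2) / σ ^ 2)
    ((∀ t : Fin n → ℝ, 0 ≤ IF₂ t) ∧
      (0 < τ → ∀ t : Fin n → ℝ, IF₂ t ≤ c * (σ ^ 2 / (τ * Real.exp 1)) * ∑ i, q i) ∧
      (τ = 0 → (∃ i, 0 < q i) → ∀ C : ℝ, ∃ t : Fin n → ℝ, C < IF₂ t)) :=
  dpd_test_second_order_IF_boundedness_general x1 x2 M hM β1 β2 σ τ c hσ hc
end

section
/- Let x₁, …, x_n ∈ ℝ^p, β ∈ ℝ^p, σ > 0, n ≥ 1, and define for t = (t₁, …, t_n) ∈ ℝⁿ the map IFσ(t) = (2(1+τ)^{5/2}/(n(2+τ²))) Σ_{i=1}^n { (t_i − x_iᵀβ)² − σ² } exp( −τ (t_i − x_iᵀβ)² / (2σ²) ) + 2τ(1+τ)²/(2+τ²). If τ > 0 then IFσ is a bounded function of t on ℝⁿ; if τ = 0 then IFσ is unbounded on ℝⁿ. -/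
open Matrix Real

/-!
For `τ > 0` every summand `(d² − σ²) exp(−τ d² / (2σ²))` is bounded uniformly in `d`, because
`u e^{−u} ≤ 1` caps `d² exp(−a d²)` by `1 / a`; a finite sum of bounded terms is bounded.
For `τ = 0` the exponential weight is `1` and, shifting every `tᵢ` by the same `s` from `xᵢᵀβ`,
the influence function equals `s² − σ²`, which is unbounded in `s`.
-/

open Finset

theorem Real.mul_exp_neg_le_one (x : ℝ) : x * exp (-x) ≤ 1 := by
  rw [exp_neg, ← div_eq_mul_inv, div_le_one (exp_pos x)]
  linarith [add_one_le_exp x]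

theorem Real.abs_sq_sub_mul_exp_neg_mul_sq_le {a : ℝ} (ha : 0 < a) (c d : ℝ) :
    |(d ^ 2 - c) * exp (-(a * d ^ 2))| ≤ 1 / a + |c| := by
  set w := exp (-(a * d ^ 2))
  have hw_pos : 0 < w := exp_pos _
  have hw_le_one : w ≤ 1 := exp_le_one_iff.mpr (by simp only [neg_nonpos]; positivity)
  have hsq : d ^ 2 * w ≤ 1 / a :=
    calc d ^ 2 * w = 1 / a * (a * d ^ 2 * w) := by field_simp
      _ ≤ 1 / a * 1 := by gcongr; exact mul_exp_neg_le_one _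
      _ = 1 / a := mul_one _
  calc |(d ^ 2 - c) * w| = |d ^ 2 - c| * w := by rw [abs_mul, abs_of_pos hw_pos]
    _ ≤ (d ^ 2 + |c|) * w := by
        gcongr
        exact (abs_sub _ _).trans_eq (by rw [abs_sq])
    _ = d ^ 2 * w + |c| * w := add_mul _ _ _
    _ ≤ 1 / a + |c| := by
        gcongr
        exact mul_le_of_le_one_right (abs_nonneg c) hw_le_one

theorem Finset.abs_mul_sum_add_le {ι : Type*} (s : Finset ι) (f : ι → ℝ) {M : ℝ}
    (hf : ∀ i ∈ s, |f i| ≤ M) (A B : ℝ) :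
    |A * ∑ i ∈ s, f i + B| ≤ |A| * (#s * M) + |B| := by
  have hsum : |∑ i ∈ s, f i| ≤ #s * M :=
    calc |∑ i ∈ s, f i| ≤ ∑ i ∈ s, |f i| := abs_sum_le_sum_abs _ _
      _ ≤ #s • M := sum_le_card_nsmul _ _ _ hf
      _ = #s * M := nsmul_eq_mul _ _
  calc |A * ∑ i ∈ s, f i + B| ≤ |A| * |∑ i ∈ s, f i| + |B| := by
        rw [← abs_mul]; exact abs_add_le _ _
    _ ≤ |A| * (#s * M) + |B| := by gcongr

theorem mdpde_variance_IF_boundedness_general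
    {n p : ℕ} (hn : 1 ≤ n)
    (x : Fin n → Fin p → ℝ) (β : Fin p → ℝ) (σ τ : ℝ)
    (hσ : 0 < σ) :
    let IFσ : (Fin n → ℝ) → ℝ := fun t =>
      (2 * (1 + τ) ^ ((5 : ℝ) / 2) / (n * (2 + τ ^ 2))) *
        ∑ i, ((t i - x i ⬝ᵥ β) ^ 2 - σ ^ 2) *
          Real.exp (-(τ * (t i - x i ⬝ᵥ β) ^ 2) / (2 * σ ^ 2))
      + 2 * τ * (1 + τ) ^ 2 / (2 + τ ^ 2)
    ((0 < τ → ∃ C : ℝ, ∀ t : Fin n → ℝ, |IFσ t| ≤ C) ∧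
      (τ = 0 → ∀ C : ℝ, ∃ t : Fin n → ℝ, C < |IFσ t|)) := by
  intro IFσ
  refine ⟨fun hτ => ?_, fun hτ C => ?_⟩
  · have ha : 0 < τ / (2 * σ ^ 2) := by positivity
    have hterm (d : ℝ) : |(d ^ 2 - σ ^ 2) * exp (-(τ * d ^ 2) / (2 * σ ^ 2))| ≤
        1 / (τ / (2 * σ ^ 2)) + |σ ^ 2| := by
      convert abs_sq_sub_mul_exp_neg_mul_sq_le ha (σ ^ 2) d using 4
      ring
    exact ⟨_, fun t => by simpa using abs_mul_sum_add_le univ _ (fun i _ => hterm _) _ _⟩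
  · subst hτ
    set s := |C| + σ + 1
    have hval : IFσ (fun i => x i ⬝ᵥ β + s) = s ^ 2 - σ ^ 2 := by
      have hn₀ : (n : ℝ) ≠ 0 := Nat.cast_ne_zero.mpr (by omega)
      simp only [IFσ, add_sub_cancel_left, zero_mul, neg_zero, zero_div, exp_zero, mul_one,
        sum_const, card_univ, Fintype.card_fin, nsmul_eq_mul, add_zero, one_rpow, ne_eq,
        OfNat.ofNat_ne_zero, not_false_eq_true, zero_pow, mul_zero, one_pow]
      field_simp
    refine ⟨fun i => x i ⬝ᵥ β + s, ?_⟩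
    rw [hval]
    nlinarith [le_abs_self C, abs_nonneg C, le_abs_self (s ^ 2 - σ ^ 2)]

/-- the influence function of the MDPDE of the error variance,
`IFσ(t) = (2(1+τ)^{5/2}/(n(2+τ²))) Σᵢ {(tᵢ − xᵢᵀβ)² − σ²} exp(−τ(tᵢ − xᵢᵀβ)²/(2σ²))
          + 2τ(1+τ)²/(2+τ²)`,
is bounded in `t` when `τ > 0` and unbounded when `τ = 0`. -/
theorem mdpde_variance_IF_boundedness
    {n p : ℕ} (hn : 1 ≤ n)
    (x : Fin n → Fin p → ℝ) (β : Fin p → ℝ) (σ τ : ℝ)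
    (hσ : 0 < σ) (hτ : 0 ≤ τ) :
    let IFσ : (Fin n → ℝ) → ℝ := fun t =>
      (2 * (1 + τ) ^ ((5 : ℝ) / 2) / (n * (2 + τ ^ 2))) *
        ∑ i, ((t i - x i ⬝ᵥ β) ^ 2 - σ ^ 2) *
          Real.exp (-(τ * (t i - x i ⬝ᵥ β) ^ 2) / (2 * σ ^ 2))
      + 2 * τ * (1 + τ) ^ 2 / (2 + τ ^ 2)
    ((0 < τ → ∃ C : ℝ, ∀ t : Fin n → ℝ, |IFσ t| ≤ C) ∧
      (τ = 0 → ∀ C : ℝ, ∃ t : Fin n → ℝ, C < |IFσ t|)) :=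
  mdpde_variance_IF_boundedness_general hn x β σ τ hσ
end
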